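/- (Accelerated gradient and skew-symmetric splitting for strongly-convex-strongly-concave saddle point problems.) Let I_V (m×m) and I_Q (n×n) be symmetric positive definite, B ∈ ℝ^{n×m}, and let f : ℝ^m → ℝ, g : ℝ^n → ℝ be differentiable with (μ_f/2)‖u−u'‖²_{I_V} ≤ D_f(u,u') ≤ (L_f/2)‖u−u'‖²_{I_V} and (μ_g/2)‖p−p'‖²_{I_Q} ≤ D_g(p,p') ≤ (L_g/2)‖p−p'‖²_{I_Q} for all arguments, with μ_f, μ_g > 0. Let (u*, p*) satisfy ∇f(u*) + Bᵀp* = 0 and −Bu* + ∇g(p*) = 0, and let L_S = λ_max(I_Q^{−1} B I_V^{−1} Bᵀ). Write x = (u,p), y = (v,q), x* = (u*,p*), I_μ = diag(μ_f I_V, μ_g I_Q), B^sym = [[0,Bᵀ],[B,0]]. Suppose 0 < α ≤ min{√(μ_f μ_g/(4L_S)), √(μ_f/(2L_f)), √(μ_g/(2L_g))} and the sequences satisfy (x̂_{k+1} − x_k)/α = y_k − x̂_{k+1}, (v_{k+1} − v_k)/α = û_{k+1} − v_{k+1} − (1/μ_f) I_V^{−1}(∇f(û_{k+1}) + Bᵀ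 q_k), (q_{k+1} − q_k)/α = p̂_{k+1} − q_{k+1} − (1/μ_g) I_Q^{−1}(∇g(p̂_{k+1}) − 2B v_{k+1} + B v_k), and (x_{k+1} − x_k)/α = y_{k+1} − x_{k+1} + (1/2)(x_{k+1} − x̂_{k+1}). Then with E^{αB}(x,y) = D_f(u,u*) + D_g(p,p*) + (1/2)(y − x*)ᵀ(I_μ − α B^sym)(y − x*), one has E^{αB}(x_{k+1}, y_{k+1}) ≤ (1 + α/2)^{−1} E^{αB}(x_k, y_k) for every k. -/

import Mathlib

open Matrix

/-- Bregman divergence `D_h(x,y) = h(x) - h(y) - ⟨∇h(y), x - y⟩`. -/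
noncomputable def breg {d : ℕ} (h : (Fin d → ℝ) → ℝ)
    (gradh : (Fin d → ℝ) → (Fin d → ℝ)) (x y : Fin d → ℝ) : ℝ :=
  h x - h y - gradh y ⬝ᵥ (x - y)

/-- The continuous linear functional `v ↦ ⟨z, v⟩`. -/
noncomputable def dpCLM {d : ℕ} (z : Fin d → ℝ) : (Fin d → ℝ) →L[ℝ] ℝ :=
  LinearMap.toContinuousLinearMap
    { toFun := fun v => z ⬝ᵥ v
      map_add' := fun a b => by simp [dotProduct_add]
      map_smul' := fun c a => by simp [dotProduct_smul] }

/-!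
The energy `E^{αB}` is a Lyapunov function, and each of the two blocks `(u, v)` (for `f`) and
`(p, q)` (for `g`) is estimated separately. The extrapolation step rewrites `D_f(u_{k+1}, u*)`
through `û_{k+1}`; the gradient pairing `⟨∇f(û_{k+1}) - ∇f(u*), v_{k+1} - u*⟩` it produces cancels
against the one coming from the preconditioned step for `v`; the mismatch
`D_f(u_{k+1}, û_{k+1})` is paid for by `μ_f/4 ‖v_{k+1} - v_k‖²` because `2 L_f α² ≤ μ_f`; and
strong convexity at `u*` yields the decay factor. Summing the two blocks, the skew coupling leaves
`α ⟨q_{k+1} - q_k, B (v_{k+1} - v_k)⟩`, which Young's inequality with `4 L_S α² ≤ μ_f μ_g`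
absorbs into the remaining `μ_f/4 ‖Δv‖² + μ_g/4 ‖Δq‖²`; the same bound absorbs the cross term of
`α/2 · E^{αB}`.
-/

namespace Matrix

variable {ι κ : Type*} {M : Matrix ι ι ℝ}

lemma PosSemidef.isSymm (hM : M.PosSemidef) : M.IsSymm :=
  isHermitian_iff_isSymm.mp hM.isHermitian

variable [Fintype ι] [Fintype κ]

lemma PosSemidef.dotProduct_mulVec_self_nonneg (hM : M.PosSemidef) (x : ι → ℝ) :
    0 ≤ x ⬝ᵥ M *ᵥ x := by
  simpa using hM.dotProduct_mulVec_nonneg x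

lemma IsSymm.dotProduct_mulVec_comm (hM : M.IsSymm) (x y : ι → ℝ) :
    x ⬝ᵥ M *ᵥ y = y ⬝ᵥ M *ᵥ x := by
  rw [dotProduct_mulVec, ← mulVec_transpose, hM.eq, dotProduct_comm]

lemma dotProduct_mulVec_neg_self (x : ι → ℝ) : (-x) ⬝ᵥ M *ᵥ (-x) = x ⬝ᵥ M *ᵥ x := by
  rw [mulVec_neg, neg_dotProduct, dotProduct_neg, neg_neg]

lemma IsSymm.two_mul_sub_dotProduct_mulVec (hM : M.IsSymm) (x y : ι → ℝ) :
    2 * ((x - y) ⬝ᵥ M *ᵥ x)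
      = x ⬝ᵥ M *ᵥ x - y ⬝ᵥ M *ᵥ y + (x - y) ⬝ᵥ M *ᵥ (x - y) := by
  have := hM.dotProduct_mulVec_comm x y
  simp only [sub_dotProduct, mulVec_sub, dotProduct_sub]
  linarith

lemma PosSemidef.two_mul_dotProduct_mulVec_le (hM : M.PosSemidef) (x y : ι → ℝ) :
    2 * (x ⬝ᵥ M *ᵥ y) ≤ x ⬝ᵥ M *ᵥ x + y ⬝ᵥ M *ᵥ y := by
  have h := hM.dotProduct_mulVec_self_nonneg (x - y)
  have := hM.isSymm.dotProduct_mulVec_comm x y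
  simp only [sub_dotProduct, mulVec_sub, dotProduct_sub] at h
  linarith

lemma transpose_mulVec_dotProduct (B : Matrix κ ι ℝ) (z : κ → ℝ) (w : ι → ℝ) :
    Bᵀ *ᵥ z ⬝ᵥ w = z ⬝ᵥ B *ᵥ w := by
  rw [mulVec_transpose, ← dotProduct_mulVec]

variable [DecidableEq ι]

lemma PosDef.mulVec_inv_mulVec (hM : M.PosDef) (x : ι → ℝ) : M *ᵥ M⁻¹ *ᵥ x = x := by
  rw [mulVec_mulVec, mul_nonsing_inv M ((isUnit_iff_isUnit_det M).mp hM.isUnit), one_mulVec]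

end Matrix

open Matrix

lemma mul_sq_le_of_le_sqrt_div {α a b : ℝ} (hα : 0 < α) (ha : 0 ≤ a) (h : α ≤ √(a / b)) :
    b * α ^ 2 ≤ a := by
  have hab : 0 < a / b := Real.sqrt_pos.mp (hα.trans_le h)
  have hb : 0 < b := by
    rcases div_pos_iff.mp hab with ⟨-, hb⟩ | ⟨ha', -⟩
    · exact hb
    · exact absurd ha ha'.not_ge
  rw [mul_comm, ← le_div_iff₀ hb]
  exact (Real.le_sqrt' hα).mp h

section Coupling

variable {ι κ : Type*} [Fintype ι] [Fintype κ]
  {IV : Matrix ι ι ℝ} {IQ : Matrix κ κ ℝ} {B : Matrix κ ι ℝ} {μf μg α LS : ℝ}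

/-- Young's inequality in the `IV`-norm, with `‖Bᵀz‖²_{IV⁻¹} ≤ LS ‖z‖²_{IQ}`. -/
lemma abs_mul_dotProduct_mulVec_le [DecidableEq ι] (hIV : IV.PosDef) (hIQ : IQ.PosSemidef)
    (hμf : 0 < μf)
    (hLS : ∀ p, p ⬝ᵥ (B * IV⁻¹ * Bᵀ) *ᵥ p ≤ LS * (p ⬝ᵥ IQ *ᵥ p))
    (hα : 4 * LS * α ^ 2 ≤ μf * μg) (w : ι → ℝ) (z : κ → ℝ) :
    |α * (z ⬝ᵥ B *ᵥ w)| ≤ μf / 4 * (w ⬝ᵥ IV *ᵥ w) + μg / 4 * (z ⬝ᵥ IQ *ᵥ z) := by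
  set c := IV⁻¹ *ᵥ Bᵀ *ᵥ z
  have hc : IV *ᵥ c = Bᵀ *ᵥ z := hIV.mulVec_inv_mulVec _
  have hcc : c ⬝ᵥ IV *ᵥ c = z ⬝ᵥ (B * IV⁻¹ * Bᵀ) *ᵥ z := by
    rw [hc, dotProduct_comm, transpose_mulVec_dotProduct, ← mulVec_mulVec, ← mulVec_mulVec]
  have hbound : α ^ 2 * (c ⬝ᵥ IV *ᵥ c) ≤ μf * μg / 4 * (z ⬝ᵥ IQ *ᵥ z) := by
    rw [hcc]
    have hz := hIQ.dotProduct_mulVec_self_nonneg z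
    nlinarith [hLS z, sq_nonneg α]
  have hwc : w ⬝ᵥ IV *ᵥ c = z ⬝ᵥ B *ᵥ w := by
    rw [hc, dotProduct_comm, transpose_mulVec_dotProduct]
  have hw := hIV.posSemidef.dotProduct_mulVec_self_nonneg w
  have young : ∀ s, s ^ 2 = α ^ 2 →
      s * (z ⬝ᵥ B *ᵥ w) ≤ μf / 4 * (w ⬝ᵥ IV *ᵥ w) + μg / 4 * (z ⬝ᵥ IQ *ᵥ z) := by
    intro s hs
    have h := hIV.posSemidef.two_mul_dotProduct_mulVec_le ((μf / 2) • w) (s • c)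
    simp only [mulVec_smul, dotProduct_smul, smul_dotProduct, smul_eq_mul, hwc] at h
    refine le_of_mul_le_mul_left ?_ hμf
    have hs' : s * (s * (c ⬝ᵥ IV *ᵥ c)) = α ^ 2 * (c ⬝ᵥ IV *ᵥ c) := by
      rw [← mul_assoc, ← sq, hs]
    nlinarith
  exact abs_le.mpr ⟨by linarith [young (-α) (by ring)], young α rfl⟩

lemma sub_dotProduct_mulVec_sub (B : Matrix κ ι ℝ) (z1 z0 zs : κ → ℝ) (w1 w0 ws : ι → ℝ) :
    (z1 - z0) ⬝ᵥ B *ᵥ (w1 - w0)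
      = (z1 - zs) ⬝ᵥ B *ᵥ (w1 - ws) - (z1 - zs) ⬝ᵥ B *ᵥ (w0 - ws)
        - (z0 - zs) ⬝ᵥ B *ᵥ (w1 - ws) + (z0 - zs) ⬝ᵥ B *ᵥ (w0 - ws) := by
  simp only [mulVec_sub, dotProduct_sub, sub_dotProduct]
  ring

lemma dotProduct_fromBlocks_sub_smul_mulVec (IV : Matrix ι ι ℝ) (IQ : Matrix κ κ ℝ)
    (B : Matrix κ ι ℝ) (μf μg α : ℝ) (a : ι → ℝ) (b : κ → ℝ) :
    Sum.elim a b ⬝ᵥ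
        (fromBlocks (μf • IV) 0 0 (μg • IQ) - α • fromBlocks 0 Bᵀ B 0) *ᵥ Sum.elim a b
      = μf * (a ⬝ᵥ IV *ᵥ a) + μg * (b ⬝ᵥ IQ *ᵥ b) - 2 * α * (b ⬝ᵥ B *ᵥ a) := by
  simp only [sub_mulVec, smul_mulVec, fromBlocks_mulVec, zero_mulVec, add_zero, zero_add,
    dotProduct_sub, dotProduct_smul, sumElim_dotProduct_sumElim, Sum.elim_comp_inl,
    Sum.elim_comp_inr, smul_eq_mul]
  rw [dotProduct_comm a (Bᵀ *ᵥ b), transpose_mulVec_dotProduct]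
  ring

end Coupling

section Block

variable {d : ℕ} (h : (Fin d → ℝ) → ℝ) (gh : (Fin d → ℝ) → Fin d → ℝ)
  {M : Matrix (Fin d) (Fin d) ℝ} {μ L α : ℝ} {xs x0 xh x1 y0 y1 : Fin d → ℝ}

lemma breg_nonneg (hM : M.PosSemidef) (hμ : 0 ≤ μ)
    (hlow : ∀ x x', μ / 2 * ((x - x') ⬝ᵥ M *ᵥ (x - x')) ≤ breg h gh x x') (x x' : Fin d → ℝ) :
    0 ≤ breg h gh x x' :=
  (mul_nonneg (by positivity) (hM.dotProduct_mulVec_self_nonneg _)).trans (hlow x x')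

lemma breg_extrapolation_identity (hx : x1 - x0 = α • (y1 - x1 + (1 / 2 : ℝ) • (x1 - xh))) :
    (1 + α / 2) * breg h gh x1 xs
      = breg h gh x0 xs + (1 + α / 2) * breg h gh x1 xh - breg h gh x0 xh
        + α * ((gh xh - gh xs) ⬝ᵥ (y1 - xs))
        - α / 2 * breg h gh xh xs - α * breg h gh xs xh := by
  have e := congrArg ((gh xh - gh xs) ⬝ᵥ ·) hx
  simp only [breg, dotProduct_sub, dotProduct_add, dotProduct_smul, sub_dotProduct,
    smul_eq_mul] at e ⊢
  linear_combination e

lemma preconditioned_step_identity (hM : M.PosDef) (hμ : μ ≠ 0) (F : Fin d → ℝ)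
    (hy : y1 - y0 = α • (xh - y1 - (1 / μ) • M⁻¹ *ᵥ F)) :
    μ / 2 * ((y1 - xs) ⬝ᵥ M *ᵥ (y1 - xs))
      = μ / 2 * ((y0 - xs) ⬝ᵥ M *ᵥ (y0 - xs)) - μ / 2 * ((y1 - y0) ⬝ᵥ M *ᵥ (y1 - y0))
        + α * μ * ((xh - xs) ⬝ᵥ M *ᵥ (y1 - xs)) - α * μ * ((y1 - xs) ⬝ᵥ M *ᵥ (y1 - xs))
        - α * (F ⬝ᵥ (y1 - xs)) := by
  have hMs := hM.posSemidef.isSymm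
  have hF : M⁻¹ *ᵥ F ⬝ᵥ M *ᵥ (y1 - xs) = F ⬝ᵥ (y1 - xs) := by
    rw [hMs.dotProduct_mulVec_comm, hM.mulVec_inv_mulVec, dotProduct_comm]
  have hpol := hMs.two_mul_sub_dotProduct_mulVec (y1 - xs) (y0 - xs)
  rw [sub_sub_sub_cancel_right] at hpol
  have e : (y1 - y0) ⬝ᵥ M *ᵥ (y1 - xs) = α * ((xh - xs) ⬝ᵥ M *ᵥ (y1 - xs)
      - (y1 - xs) ⬝ᵥ M *ᵥ (y1 - xs)) - α / μ * (F ⬝ᵥ (y1 - xs)) := by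
    rw [hy, ← sub_sub_sub_cancel_right xh y1 xs, smul_dotProduct,
      sub_dotProduct (xh - xs - (y1 - xs)), sub_dotProduct (xh - xs), smul_dotProduct, hF]
    simp only [smul_eq_mul]
    ring
  field_simp at e
  linear_combination e - (μ / 2) * hpol

lemma breg_extrapolation_le (hM : M.PosSemidef) (hμ : 0 ≤ μ)
    (hlow : ∀ x x', μ / 2 * ((x - x') ⬝ᵥ M *ᵥ (x - x')) ≤ breg h gh x x')
    (hup : ∀ x x', breg h gh x x' ≤ L / 2 * ((x - x') ⬝ᵥ M *ᵥ (x - x')))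
    (hα : 0 ≤ α) (hαL : 2 * L * α ^ 2 ≤ μ) (hxh : xh - x0 = α • (y0 - xh))
    (hx : x1 - x0 = α • (y1 - x1 + (1 / 2 : ℝ) • (x1 - xh))) :
    (1 + α / 2) * breg h gh x1 xh ≤ μ / 4 * ((y1 - y0) ⬝ᵥ M *ᵥ (y1 - y0)) := by
  have hv : (1 + α / 2) • (x1 - xh) = α • (y1 - y0) := by
    linear_combination (norm := module) hx - hxh
  have hPW := congrArg (fun t => t ⬝ᵥ M *ᵥ t) hv
  simp only [mulVec_smul, dotProduct_smul, smul_dotProduct, smul_eq_mul, ← mul_assoc,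
    ← sq] at hPW
  have hD0 := breg_nonneg h gh hM hμ hlow x1 xh
  have hW := hM.dotProduct_mulVec_self_nonneg (y1 - y0)
  calc (1 + α / 2) * breg h gh x1 xh ≤ (1 + α / 2) ^ 2 * breg h gh x1 xh := by
        nlinarith
    _ ≤ (1 + α / 2) ^ 2 * (L / 2 * ((x1 - xh) ⬝ᵥ M *ᵥ (x1 - xh))) := by gcongr; exact hup _ _
    _ = L / 2 * (α ^ 2 * ((y1 - y0) ⬝ᵥ M *ᵥ (y1 - y0))) := by rw [← hPW]; ring
    _ ≤ μ / 4 * ((y1 - y0) ⬝ᵥ M *ᵥ (y1 - y0)) := by nlinarith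

lemma agss_block_estimate (hM : M.PosDef) (hμ : 0 < μ)
    (hlow : ∀ x x', μ / 2 * ((x - x') ⬝ᵥ M *ᵥ (x - x')) ≤ breg h gh x x')
    (hup : ∀ x x', breg h gh x x' ≤ L / 2 * ((x - x') ⬝ᵥ M *ᵥ (x - x')))
    (hα : 0 < α) (hαL : 2 * L * α ^ 2 ≤ μ) {c c' : Fin d → ℝ}
    (hxh : xh - x0 = α • (y0 - xh))
    (hy : y1 - y0 = α • (xh - y1 - (1 / μ) • M⁻¹ *ᵥ (gh xh + c)))
    (hx : x1 - x0 = α • (y1 - x1 + (1 / 2 : ℝ) • (x1 - xh)))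
    (hs : gh xs + c' = 0) :
    (1 + α / 2) * (breg h gh x1 xs + μ / 2 * ((y1 - xs) ⬝ᵥ M *ᵥ (y1 - xs)))
      ≤ breg h gh x0 xs + μ / 2 * ((y0 - xs) ⬝ᵥ M *ᵥ (y0 - xs))
        - μ / 4 * ((y1 - y0) ⬝ᵥ M *ᵥ (y1 - y0)) - α * μ / 4 * ((y1 - xs) ⬝ᵥ M *ᵥ (y1 - xs))
        - α * ((c - c') ⬝ᵥ (y1 - xs)) := by
  have hM' := hM.posSemidef
  have hgrad : gh xh + c = (gh xh - gh xs) + (c - c') := by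
    linear_combination (norm := module) hs
  have hid := breg_extrapolation_identity h gh (xs := xs) hx
  have hdual := preconditioned_step_identity (xs := xs) hM hμ.ne' _ hy
  rw [hgrad, add_dotProduct] at hdual
  have hsmooth := breg_extrapolation_le h gh hM' hμ.le hlow hup hα.le hαL hxh hx
  have hconv := hlow xs xh
  rw [← neg_sub xh xs, dotProduct_mulVec_neg_self] at hconv
  have hyoung := hM'.two_mul_dotProduct_mulVec_le (xh - xs) (y1 - xs)
  have hconvα := mul_le_mul_of_nonneg_left hconv hα.le
  have hyoungα := mul_le_mul_of_nonneg_left hyoung (by positivity : 0 ≤ α * μ / 2)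
  have hhat := mul_nonneg hα.le (breg_nonneg h gh hM' hμ.le hlow xh xs)
  have hstart := breg_nonneg h gh hM' hμ.le hlow x0 xh
  linarith

end Block

theorem saddle_agss_linear_convergence_general
    {m n : ℕ}
    (IV : Matrix (Fin m) (Fin m) ℝ) (IQ : Matrix (Fin n) (Fin n) ℝ)
    (hIV : IV.PosDef) (hIQ : IQ.PosDef)
    (B : Matrix (Fin n) (Fin m) ℝ)
    (μf Lf μg Lg LS α : ℝ) (hμf : 0 < μf) (hμg : 0 < μg)
    (f : (Fin m → ℝ) → ℝ) (gradf : (Fin m → ℝ) → (Fin m → ℝ))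
    (hflow : ∀ u u' : Fin m → ℝ,
      μf / 2 * ((u - u') ⬝ᵥ IV.mulVec (u - u')) ≤ breg f gradf u u')
    (hfup : ∀ u u' : Fin m → ℝ,
      breg f gradf u u' ≤ Lf / 2 * ((u - u') ⬝ᵥ IV.mulVec (u - u')))
    (g : (Fin n → ℝ) → ℝ) (gradg : (Fin n → ℝ) → (Fin n → ℝ))
    (hglow : ∀ p p' : Fin n → ℝ,
      μg / 2 * ((p - p') ⬝ᵥ IQ.mulVec (p - p')) ≤ breg g gradg p p')
    (hgup : ∀ p p' : Fin n → ℝ,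
      breg g gradg p p' ≤ Lg / 2 * ((p - p') ⬝ᵥ IQ.mulVec (p - p')))
    (us : Fin m → ℝ) (ps : Fin n → ℝ)
    (hsad1 : gradf us + Bᵀ.mulVec ps = 0)
    (hsad2 : -(B.mulVec us) + gradg ps = 0)
    (hLS : IsLeast {r : ℝ | ∀ p : Fin n → ℝ,
      p ⬝ᵥ (B * IV⁻¹ * Bᵀ).mulVec p ≤ r * (p ⬝ᵥ IQ.mulVec p)} LS)
    (hα0 : 0 < α)
    (hα1 : α ≤ min (min (Real.sqrt (μf * μg / (4 * LS)))
              (Real.sqrt (μf / (2 * Lf)))) (Real.sqrt (μg / (2 * Lg))))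
    (u v uh : ℕ → (Fin m → ℝ)) (p q ph : ℕ → (Fin n → ℝ))
    (hstep1u : ∀ k, uh (k + 1) - u k = α • (v k - uh (k + 1)))
    (hstep1p : ∀ k, ph (k + 1) - p k = α • (q k - ph (k + 1)))
    (hstep2 : ∀ k, v (k + 1) - v k =
      α • (uh (k + 1) - v (k + 1)
        - (1 / μf) • IV⁻¹.mulVec (gradf (uh (k + 1)) + Bᵀ.mulVec (q k))))
    (hstep3 : ∀ k, q (k + 1) - q k =
      α • (ph (k + 1) - q (k + 1)
        - (1 / μg) • IQ⁻¹.mulVec (gradg (ph (k + 1))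
            - (2 : ℝ) • B.mulVec (v (k + 1)) + B.mulVec (v k))))
    (hstep4u : ∀ k, u (k + 1) - u k =
      α • (v (k + 1) - u (k + 1) + (1 / 2 : ℝ) • (u (k + 1) - uh (k + 1))))
    (hstep4p : ∀ k, p (k + 1) - p k =
      α • (q (k + 1) - p (k + 1) + (1 / 2 : ℝ) • (p (k + 1) - ph (k + 1)))) :
    ∀ k,
      breg f gradf (u (k + 1)) us + breg g gradg (p (k + 1)) ps
        + (1 / 2) * (Sum.elim (v (k + 1) - us) (q (k + 1) - ps) ⬝ᵥ
            ((Matrix.fromBlocks (μf • IV) 0 0 (μg • IQ)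
              - α • Matrix.fromBlocks 0 Bᵀ B 0).mulVec
                (Sum.elim (v (k + 1) - us) (q (k + 1) - ps))))
      ≤ (1 + α / 2)⁻¹ *
        (breg f gradf (u k) us + breg g gradg (p k) ps
          + (1 / 2) * (Sum.elim (v k - us) (q k - ps) ⬝ᵥ
              ((Matrix.fromBlocks (μf • IV) 0 0 (μg • IQ)
                - α • Matrix.fromBlocks 0 Bᵀ B 0).mulVec
                  (Sum.elim (v k - us) (q k - ps))))) := by
  intro k
  rw [le_min_iff, le_min_iff] at hα1
  obtain ⟨⟨hαS, hαf⟩, hαg⟩ := hα1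
  have hstep3' := hstep3 k
  rw [sub_add_eq_add_sub, add_sub_assoc] at hstep3'
  have hF := agss_block_estimate f gradf hIV hμf hflow hfup hα0
    (mul_sq_le_of_le_sqrt_div hα0 hμf.le hαf) (hstep1u k) (hstep2 k) (hstep4u k) hsad1
  have hG := agss_block_estimate g gradg hIQ hμg hglow hgup hα0
    (mul_sq_le_of_le_sqrt_div hα0 hμg.le hαg) (hstep1p k) hstep3' (hstep4p k)
    ((add_comm _ _).trans hsad2)
  rw [← mulVec_sub, transpose_mulVec_dotProduct] at hF
  have eG : (B *ᵥ v k - (2 : ℝ) • B *ᵥ v (k + 1) - -(B *ᵥ us)) ⬝ᵥ (q (k + 1) - ps)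
      = (q (k + 1) - ps) ⬝ᵥ B *ᵥ (v k - us)
        - 2 * ((q (k + 1) - ps) ⬝ᵥ B *ᵥ (v (k + 1) - us)) := by
    rw [dotProduct_comm]
    simp only [mulVec_sub, dotProduct_sub, dotProduct_neg, dotProduct_smul, smul_eq_mul]
    ring
  rw [eG] at hG
  have hcross := abs_mul_dotProduct_mulVec_le hIV hIQ.posSemidef hμf hLS.1
    (mul_sq_le_of_le_sqrt_div hα0 (by positivity) hαS)
  have hcross_step := le_of_abs_le (hcross (v (k + 1) - v k) (q (k + 1) - q k))
  rw [sub_dotProduct_mulVec_sub _ _ _ ps _ _ us] at hcross_step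
  have hcross_new := neg_le_of_abs_le (hcross (v (k + 1) - us) (q (k + 1) - ps))
  rw [dotProduct_fromBlocks_sub_smul_mulVec, dotProduct_fromBlocks_sub_smul_mulVec,
    le_inv_mul_iff₀ (by positivity)]
  linarith [mul_le_mul_of_nonneg_left hcross_new (by positivity : 0 ≤ α / 2),
    mul_nonneg (mul_nonneg hα0.le hμf.le)
      (hIV.posSemidef.dotProduct_mulVec_self_nonneg (v (k + 1) - us)),
    mul_nonneg (mul_nonneg hα0.le hμg.le)
      (hIQ.posSemidef.dotProduct_mulVec_self_nonneg (q (k + 1) - ps))]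

/-- **Accelerated gradient and skew-symmetric splitting for strongly-convex–strongly-concave
saddle point problems.**  With `E^{αB}(x,y) = D_f(u,u*) + D_g(p,p*) +
½(y-x*)ᵀ(I_μ - αBˢʸᵐ)(y-x*)`, the AGSS iteration contracts:
`E^{αB}(x_{k+1},y_{k+1}) ≤ (1 + α/2)⁻¹ E^{αB}(x_k,y_k)`. -/
theorem saddle_agss_linear_convergence
    {m n : ℕ}
    (IV : Matrix (Fin m) (Fin m) ℝ) (IQ : Matrix (Fin n) (Fin n) ℝ)
    (hIV : IV.PosDef) (hIQ : IQ.PosDef)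
    (B : Matrix (Fin n) (Fin m) ℝ)
    (μf Lf μg Lg LS α : ℝ) (hμf : 0 < μf) (hμg : 0 < μg)
    (f : (Fin m → ℝ) → ℝ) (gradf : (Fin m → ℝ) → (Fin m → ℝ))
    (hf : ∀ u, HasFDerivAt f (dpCLM (gradf u)) u)
    (hflow : ∀ u u' : Fin m → ℝ,
      μf / 2 * ((u - u') ⬝ᵥ IV.mulVec (u - u')) ≤ breg f gradf u u')
    (hfup : ∀ u u' : Fin m → ℝ,
      breg f gradf u u' ≤ Lf / 2 * ((u - u') ⬝ᵥ IV.mulVec (u - u')))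
    (g : (Fin n → ℝ) → ℝ) (gradg : (Fin n → ℝ) → (Fin n → ℝ))
    (hg : ∀ p, HasFDerivAt g (dpCLM (gradg p)) p)
    (hglow : ∀ p p' : Fin n → ℝ,
      μg / 2 * ((p - p') ⬝ᵥ IQ.mulVec (p - p')) ≤ breg g gradg p p')
    (hgup : ∀ p p' : Fin n → ℝ,
      breg g gradg p p' ≤ Lg / 2 * ((p - p') ⬝ᵥ IQ.mulVec (p - p')))
    (us : Fin m → ℝ) (ps : Fin n → ℝ)
    (hsad1 : gradf us + Bᵀ.mulVec ps = 0)
    (hsad2 : -(B.mulVec us) + gradg ps = 0)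
    (hLS : IsLeast {r : ℝ | ∀ p : Fin n → ℝ,
      p ⬝ᵥ (B * IV⁻¹ * Bᵀ).mulVec p ≤ r * (p ⬝ᵥ IQ.mulVec p)} LS)
    (hα0 : 0 < α)
    (hα1 : α ≤ min (min (Real.sqrt (μf * μg / (4 * LS)))
              (Real.sqrt (μf / (2 * Lf)))) (Real.sqrt (μg / (2 * Lg))))
    (u v uh : ℕ → (Fin m → ℝ)) (p q ph : ℕ → (Fin n → ℝ))
    (hstep1u : ∀ k, uh (k + 1) - u k = α • (v k - uh (k + 1)))
    (hstep1p : ∀ k, ph (k + 1) - p k = α • (q k - ph (k + 1)))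
    (hstep2 : ∀ k, v (k + 1) - v k =
      α • (uh (k + 1) - v (k + 1)
        - (1 / μf) • IV⁻¹.mulVec (gradf (uh (k + 1)) + Bᵀ.mulVec (q k))))
    (hstep3 : ∀ k, q (k + 1) - q k =
      α • (ph (k + 1) - q (k + 1)
        - (1 / μg) • IQ⁻¹.mulVec (gradg (ph (k + 1))
            - (2 : ℝ) • B.mulVec (v (k + 1)) + B.mulVec (v k))))
    (hstep4u : ∀ k, u (k + 1) - u k =
      α • (v (k + 1) - u (k + 1) + (1 / 2 : ℝ) • (u (k + 1) - uh (k + 1))))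
    (hstep4p : ∀ k, p (k + 1) - p k =
      α • (q (k + 1) - p (k + 1) + (1 / 2 : ℝ) • (p (k + 1) - ph (k + 1)))) :
    ∀ k,
      breg f gradf (u (k + 1)) us + breg g gradg (p (k + 1)) ps
        + (1 / 2) * (Sum.elim (v (k + 1) - us) (q (k + 1) - ps) ⬝ᵥ
            ((Matrix.fromBlocks (μf • IV) 0 0 (μg • IQ)
              - α • Matrix.fromBlocks 0 Bᵀ B 0).mulVec
                (Sum.elim (v (k + 1) - us) (q (k + 1) - ps))))
      ≤ (1 + α / 2)⁻¹ *
        (breg f gradf (u k) us + breg g gradg (p k) ps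
          + (1 / 2) * (Sum.elim (v k - us) (q k - ps) ⬝ᵥ
              ((Matrix.fromBlocks (μf • IV) 0 0 (μg • IQ)
                - α • Matrix.fromBlocks 0 Bᵀ B 0).mulVec
                  (Sum.elim (v k - us) (q k - ps))))) :=
  saddle_agss_linear_convergence_general IV IQ hIV hIQ B μf Lf μg Lg LS α hμf hμg f gradf hflow hfup
    g gradg hglow hgup us ps hsad1 hsad2 hLS hα0 hα1 u v uh p q ph hstep1u hstep1p hstep2 hstep3
    hstep4u hstep4p
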